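/- arXiv:1804.08960 — 3 statements merged into one kernel-verified Lean document; each statement's English description precedes it below -/
import Mathlib

section
/- Let T be a bounded linear operator on a complex Hilbert space H. Suppose there exist constants 0 < m ≤ M such that m‖x‖ ≤ ‖T^n x‖ ≤ M‖x‖ for all n ≥ 1 and all x ∈ H. Then T is similar to an isometry: there exists an invertible bounded operator L with L⁻¹TL an isometry. -/
/-!
Average the orbit inner products `⟪Tⁿ⁺¹x, Tⁿ⁺¹y⟫` by a Banach limit (Cesàro means taken along a
free ultrafilter). The result `φ` is a bounded Hermitian sesquilinear form; it is `T`-invariant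
because Cesàro limits ignore a shift, and coercive by the lower orbit bound. Its representing
operator `S` is therefore strictly positive, and `R = √S` satisfies
`‖R x‖² = φ(x, x) = φ(T x, T x) = ‖R T x‖²`, so `R T R⁻¹` is an isometry.
-/

open Filter Topology Finset ComplexConjugate ContinuousLinearMap InnerProductSpace

noncomputable section

def cesaroMean (u : ℕ → ℂ) (N : ℕ) : ℂ := (N : ℂ)⁻¹ * ∑ n ∈ range N, u n

/-- For bounded `u` the Cesàro means converge along the hyperfilter by compactness
(`tendsto_cesaroMean_banachLimit`); for unbounded `u` the value is junk. -/
def banachLimit (u : ℕ → ℂ) : ℂ := limUnder (hyperfilter ℕ) (cesaroMean u)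

def orbitForm {H : Type*} [NormedAddCommGroup H] [InnerProductSpace ℂ H]
    (T : H →L[ℂ] H) (x y : H) : ℂ :=
  banachLimit fun n => ⟪(T ^ (n + 1)) x, (T ^ (n + 1)) y⟫_ℂ

end

section BanachLimit

variable {u v : ℕ → ℂ} {C D : ℝ}

theorem norm_cesaroMean_le (hu : ∀ n, ‖u n‖ ≤ C) (N : ℕ) : ‖cesaroMean u N‖ ≤ C := by
  rcases N.eq_zero_or_pos with rfl | hN
  · simpa [cesaroMean] using (norm_nonneg _).trans (hu 0)
  · rw [cesaroMean, norm_mul, norm_inv, Complex.norm_natCast, inv_mul_le_iff₀ (by positivity)]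
    simpa using norm_sum_le_of_le (range N) fun n _ => hu n

theorem tendsto_cesaroMean_banachLimit (hu : ∀ n, ‖u n‖ ≤ C) :
    Tendsto (cesaroMean u) (hyperfilter ℕ) (𝓝 (banachLimit u)) := by
  refine tendsto_nhds_limUnder ?_
  obtain ⟨z, -, hz⟩ := (isCompact_closedBall (0 : ℂ) C).ultrafilter_le_nhds
    ((hyperfilter ℕ).map (cesaroMean u))
    (le_principal_iff.mpr <| Filter.mem_map.mpr <| Eventually.of_forall fun N => by
      simpa using norm_cesaroMean_le hu N)
  exact ⟨z, hz⟩

theorem banachLimit_add (hu : ∀ n, ‖u n‖ ≤ C) (hv : ∀ n, ‖v n‖ ≤ D) :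
    banachLimit (u + v) = banachLimit u + banachLimit v := by
  refine ((tendsto_cesaroMean_banachLimit hu).add (tendsto_cesaroMean_banachLimit hv)).congr
    (fun N => ?_) |>.limUnder_eq
  simp [cesaroMean, sum_add_distrib, mul_add]

theorem banachLimit_const_mul (hu : ∀ n, ‖u n‖ ≤ C) (c : ℂ) :
    banachLimit (fun n => c * u n) = c * banachLimit u := by
  refine ((tendsto_cesaroMean_banachLimit hu).const_mul c).congr (fun N => ?_) |>.limUnder_eq
  simp only [cesaroMean, ← mul_sum]
  ring

theorem banachLimit_conj (hu : ∀ n, ‖u n‖ ≤ C) :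
    banachLimit (fun n => conj (u n)) = conj (banachLimit u) := by
  refine ((Complex.continuous_conj.tendsto _).comp (tendsto_cesaroMean_banachLimit hu)).congr
    (fun N => ?_) |>.limUnder_eq
  simp [cesaroMean]

theorem norm_banachLimit_le (hu : ∀ n, ‖u n‖ ≤ C) : ‖banachLimit u‖ ≤ C :=
  le_of_tendsto (tendsto_cesaroMean_banachLimit hu).norm
    (Eventually.of_forall (norm_cesaroMean_le hu))

theorem le_re_banachLimit (hu : ∀ n, ‖u n‖ ≤ C) {c : ℝ} (hc : ∀ n, c ≤ (u n).re) :
    c ≤ (banachLimit u).re := by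
  refine ge_of_tendsto (Complex.continuous_re.tendsto _ |>.comp
    (tendsto_cesaroMean_banachLimit hu)) ?_
  filter_upwards [Nat.hyperfilter_le_atTop (eventually_gt_atTop 0)] with N hN
  have hsum : N * c ≤ ∑ n ∈ range N, (u n).re := by
    simpa using card_nsmul_le_sum (range N) _ _ fun n _ => hc n
  simp only [Function.comp_apply, cesaroMean, ← Complex.ofReal_natCast, ← Complex.ofReal_inv,
    Complex.re_ofReal_mul, Complex.re_sum]
  rw [le_inv_mul_iff₀ (by positivity)]
  linarith

theorem banachLimit_comp_succ (hu : ∀ n, ‖u n‖ ≤ C) :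
    banachLimit (fun n => u (n + 1)) = banachLimit u := by
  have hdiff : ∀ N : ℕ, cesaroMean (fun n => u (n + 1)) N - cesaroMean u N
      = (N : ℂ)⁻¹ * (u N - u 0) := fun N => by
    have htelescope := sum_range_succ' u N
    rw [sum_range_succ] at htelescope
    simp only [cesaroMean, ← mul_sub]
    congr 1
    linear_combination htelescope.symm
  have hbound : ∀ N : ℕ, ‖(N : ℂ)⁻¹ * (u N - u 0)‖ ≤ (N : ℝ)⁻¹ * (2 * C) := fun N => by
    rw [norm_mul, norm_inv, Complex.norm_natCast]
    gcongr
    linarith [norm_sub_le (u N) (u 0), hu N, hu 0]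
  have hzero : Tendsto (fun N : ℕ => (N : ℂ)⁻¹ * (u N - u 0)) (hyperfilter ℕ) (𝓝 0) := by
    refine squeeze_zero_norm hbound ?_ |>.mono_left Nat.hyperfilter_le_atTop
    simpa using tendsto_inv_atTop_nhds_zero_nat.mul_const (2 * C)
  refine ((tendsto_cesaroMean_banachLimit hu).add hzero).congr (fun N => ?_) |>.limUnder_eq
    |>.trans (add_zero _)
  rw [← hdiff]
  ring

end BanachLimit

section PositiveOperator

variable {H : Type*} [NormedAddCommGroup H] [InnerProductSpace ℂ H] [CompleteSpace H]

theorem isStrictlyPositive_continuousLinearMapOfBilin (B : H →L⋆[ℂ] H →L[ℂ] ℂ)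
    (hB : ∀ x y, conj (B x y) = B y x) {c : ℝ} (hc : 0 < c)
    (hcoer : ∀ x, c * ‖x‖ ^ 2 ≤ (B x x).re) :
    IsStrictlyPositive (continuousLinearMapOfBilin B) := by
  set S := continuousLinearMapOfBilin B
  have hS : S.IsPositive := by
    refine ⟨fun x y => ?_, fun x => ?_⟩
    · simp only [coe_coe, S, continuousLinearMapOfBilin_apply, ← inner_conj_symm x, hB]
    · rw [reApplyInnerSelf_apply, continuousLinearMapOfBilin_apply]
      exact (mul_nonneg hc.le (sq_nonneg _)).trans (hcoer x)
  refine IsUnit.isStrictlyPositive ?_ ((nonneg_iff_isPositive S).mpr hS)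
  refine isUnit_of_forall_le_norm_inner_map S (c := c.toNNReal) (by simpa using hc) fun x => ?_
  rw [continuousLinearMapOfBilin_apply, Real.coe_toNNReal _ hc.le, mul_comm]
  exact (hcoer x).trans (Complex.re_le_norm _)

theorem norm_cfcSqrt_apply_sq {S : H →L[ℂ] H} (hS : 0 ≤ S) (x : H) :
    ‖CFC.sqrt S x‖ ^ 2 = (⟪S x, x⟫_ℂ).re := by
  rw [apply_norm_sq_eq_inner_adjoint_left, (CFC.sqrt_nonneg S).isSelfAdjoint.adjoint_eq,
    ← ContinuousLinearMap.mul_def, CFC.sqrt_mul_sqrt_self S hS]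
  rfl

theorem exists_similar_isometry_of_isStrictlyPositive (T : H →L[ℂ] H) {S : H →L[ℂ] H}
    (hS : IsStrictlyPositive S) (hT : ∀ x, (⟪S (T x), T x⟫_ℂ).re = (⟪S x, x⟫_ℂ).re) :
    ∃ L : H ≃L[ℂ] H, ∀ x : H, ‖L.symm (T (L x))‖ = ‖x‖ := by
  set R := ContinuousLinearEquiv.unitsEquiv ℂ H hS.isUnit_cfcSqrt.unit
  have hR : ∀ x, ‖R x‖ ^ 2 = (⟪S x, x⟫_ℂ).re := norm_cfcSqrt_apply_sq hS.nonneg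
  refine ⟨R.symm, fun x => ?_⟩
  rw [R.symm_symm, ← sq_eq_sq₀ (norm_nonneg _) (norm_nonneg _), hR, hT, ← hR, R.apply_symm_apply]

end PositiveOperator

section OrbitForm

variable {H : Type*} [NormedAddCommGroup H] [InnerProductSpace ℂ H] {T : H →L[ℂ] H} {M : ℝ}
  (hM : ∀ n x, ‖(T ^ (n + 1)) x‖ ≤ M * ‖x‖)
include hM

theorem norm_inner_pow_apply_le (x y : H) (n : ℕ) :
    ‖⟪(T ^ (n + 1)) x, (T ^ (n + 1)) y⟫_ℂ‖ ≤ M ^ 2 * ‖x‖ * ‖y‖ :=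
  calc _ ≤ ‖(T ^ (n + 1)) x‖ * ‖(T ^ (n + 1)) y‖ := norm_inner_le_norm _ _
    _ ≤ (M * ‖x‖) * (M * ‖y‖) :=
      mul_le_mul (hM n x) (hM n y) (norm_nonneg _) ((norm_nonneg _).trans (hM n x))
    _ = M ^ 2 * ‖x‖ * ‖y‖ := by ring

theorem norm_orbitForm_le (x y : H) : ‖orbitForm T x y‖ ≤ M ^ 2 * ‖x‖ * ‖y‖ :=
  norm_banachLimit_le (norm_inner_pow_apply_le hM x y)

theorem orbitForm_add_right (x y z : H) :
    orbitForm T x (y + z) = orbitForm T x y + orbitForm T x z := by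
  simp only [orbitForm, map_add, inner_add_right]
  exact banachLimit_add (norm_inner_pow_apply_le hM x y) (norm_inner_pow_apply_le hM x z)

theorem orbitForm_smul_right (c : ℂ) (x y : H) :
    orbitForm T x (c • y) = c * orbitForm T x y := by
  simp only [orbitForm, map_smul, inner_smul_right]
  exact banachLimit_const_mul (norm_inner_pow_apply_le hM x y) c

theorem conj_orbitForm (x y : H) : conj (orbitForm T x y) = orbitForm T y x := by
  simp only [orbitForm, ← banachLimit_conj (norm_inner_pow_apply_le hM x y), inner_conj_symm]

theorem orbitForm_add_left (x y z : H) :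
    orbitForm T (x + y) z = orbitForm T x z + orbitForm T y z := by
  rw [← conj_orbitForm hM z, orbitForm_add_right hM, map_add, conj_orbitForm hM,
    conj_orbitForm hM]

theorem orbitForm_smul_left (c : ℂ) (x y : H) :
    orbitForm T (c • x) y = conj c * orbitForm T x y := by
  rw [← conj_orbitForm hM y, orbitForm_smul_right hM, map_mul, conj_orbitForm hM]

theorem orbitForm_apply_apply (x y : H) : orbitForm T (T x) (T y) = orbitForm T x y := by
  have hshift : ∀ n (z : H), (T ^ (n + 1)) (T z) = (T ^ (n + 1 + 1)) z := fun n z => by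
    rw [pow_succ _ (n + 1)]; rfl
  simp only [orbitForm, hshift]
  exact banachLimit_comp_succ (u := fun n => ⟪(T ^ (n + 1)) x, (T ^ (n + 1)) y⟫_ℂ)
    (norm_inner_pow_apply_le hM x y)

theorem le_re_orbitForm {m : ℝ} (hm : 0 ≤ m) (hlow : ∀ n x, m * ‖x‖ ≤ ‖(T ^ (n + 1)) x‖)
    (x : H) : m ^ 2 * ‖x‖ ^ 2 ≤ (orbitForm T x x).re := by
  refine le_re_banachLimit (norm_inner_pow_apply_le hM x x) fun n => ?_
  rw [← RCLike.re_to_complex, inner_self_eq_norm_sq, ← mul_pow]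
  exact pow_le_pow_left₀ (by positivity) (hlow n x) 2

theorem exists_isStrictlyPositive_inner_eq_orbitForm [CompleteSpace H] {m : ℝ} (hm : 0 < m)
    (hlow : ∀ n x, m * ‖x‖ ≤ ‖(T ^ (n + 1)) x‖) :
    ∃ S : H →L[ℂ] H, IsStrictlyPositive S ∧ ∀ x y, ⟪S x, y⟫_ℂ = orbitForm T x y := by
  let B : H →L⋆[ℂ] H →L[ℂ] ℂ := LinearMap.mkContinuous₂
    (LinearMap.mk₂'ₛₗ (starRingEnd ℂ) (RingHom.id ℂ) (orbitForm T) (orbitForm_add_left hM)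
      (orbitForm_smul_left hM) (orbitForm_add_right hM) (orbitForm_smul_right hM))
    (M ^ 2) (norm_orbitForm_le hM)
  refine ⟨continuousLinearMapOfBilin B, ?_, continuousLinearMapOfBilin_apply B⟩
  exact isStrictlyPositive_continuousLinearMapOfBilin B (conj_orbitForm hM) (pow_pos hm 2)
    (le_re_orbitForm hM hm.le hlow)

end OrbitForm

theorem similar_to_isometry_of_two_sided_orbit_bounds_general
    {H : Type*} [NormedAddCommGroup H] [InnerProductSpace ℂ H] [CompleteSpace H]
    (T : H →L[ℂ] H) (m M : ℝ) (hm : 0 < m)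
    (hbd : ∀ n : ℕ, 1 ≤ n → ∀ x : H,
      m * ‖x‖ ≤ ‖(T ^ n) x‖ ∧ ‖(T ^ n) x‖ ≤ M * ‖x‖) :
    ∃ L : H ≃L[ℂ] H, ∀ x : H, ‖L.symm (T (L x))‖ = ‖x‖ := by
  have hup : ∀ n x, ‖(T ^ (n + 1)) x‖ ≤ M * ‖x‖ := fun n x => (hbd (n + 1) n.succ_pos x).2
  have hlow : ∀ n x, m * ‖x‖ ≤ ‖(T ^ (n + 1)) x‖ := fun n x => (hbd (n + 1) n.succ_pos x).1
  obtain ⟨S, hS, hSform⟩ := exists_isStrictlyPositive_inner_eq_orbitForm hup hm hlow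
  exact exists_similar_isometry_of_isStrictlyPositive T hS fun x => by
    rw [hSform, hSform, orbitForm_apply_apply hup]

theorem similar_to_isometry_of_two_sided_orbit_bounds
    {H : Type*} [NormedAddCommGroup H] [InnerProductSpace ℂ H] [CompleteSpace H]
    (T : H →L[ℂ] H) (m M : ℝ) (hm : 0 < m) (hmM : m ≤ M)
    (hbd : ∀ n : ℕ, 1 ≤ n → ∀ x : H,
      m * ‖x‖ ≤ ‖(T ^ n) x‖ ∧ ‖(T ^ n) x‖ ≤ M * ‖x‖) :
    ∃ L : H ≃L[ℂ] H, ∀ x : H, ‖L.symm (T (L x))‖ = ‖x‖ :=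
  similar_to_isometry_of_two_sided_orbit_bounds_general T m M hm hbd
end

section
/- Let T be a bounded linear operator on a complex Hilbert space H. Suppose there exist positive constants m, M and an operator K ∈ B(H) with closed range and finite-dimensional kernel such that m‖Kx‖² ≤ (1/N)·Σ_{n=0}^{N-1} ‖T^n x‖² ≤ M‖x‖² for every N ≥ 1 and every x ∈ H, and every eigenvalue of T (if any) has modulus one. Then T is similar to an isometry. -/
/-!
Put `G n = (1/n) ∑_{k<n} T^{k*} T^k` and `D N = (1/N) ∑_{n<N} G (n+1)`. The hypotheses say
`m K*K ≤ G n ≤ M`, and `T* G n T` differs from `G (n+1)` by `O(1/n)`; averaging once more makes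
these errors telescope, so `T* D N T - D N → 0` in norm. A weak-operator cluster point `S` of
`D N` along an ultrafilter is then a positive operator with `T* S T = S` and `m K*K ≤ S`, hence
`R = √S` satisfies `‖R T x‖ = ‖R x‖` and `√m ‖K x‖ ≤ ‖R x‖`.

The kernel of `R` is `T`-invariant and lies in the finite-dimensional kernel of `K`. If it were
nonzero it would contain an eigenvector of `T`; its eigenvalue is unimodular, so its orbit is
isometric and `S` acts on it as the identity, which is absurd. Because `K` has closed range and
finite-dimensional kernel, the bound `‖K x‖ ≲ ‖R x‖` then makes the injective operator `R` bounded
below, and a self-adjoint operator that is bounded below is invertible. `L = R⁻¹` does the job.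
-/

open Filter Finset Topology ContinuousLinearMap
open scoped ComplexOrder InnerProductSpace

noncomputable def cesaro {E : Type*} [AddCommGroup E] [Module ℝ E] (u : ℕ → E) (N : ℕ) : E :=
  (N : ℝ)⁻¹ • ∑ n ∈ range N, u n

section Cesaro

variable {E : Type*}

theorem cesaro_mem [AddCommGroup E] [Module ℝ E] {s : Set E} (hs : Convex ℝ s) {u : ℕ → E}
    (hu : ∀ n, u n ∈ s) {N : ℕ} (hN : N ≠ 0) : cesaro u N ∈ s := by
  rw [cesaro, smul_sum]
  refine hs.sum_mem (fun _ _ => by positivity) ?_ fun n _ => hu n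
  simp [hN]

theorem tendsto_map_cesaro_sub_cesaro [NormedAddCommGroup E] [NormedSpace ℝ E] (Φ : E →ₗ[ℝ] E)
    {u : ℕ → E} {C : ℝ} (hu : ∀ n, ‖u n‖ ≤ C)
    (h : Tendsto (fun n => Φ (u n) - u (n + 1)) atTop (𝓝 0)) :
    Tendsto (fun N => Φ (cesaro u N) - cesaro u N) atTop (𝓝 0) := by
  have key : ∀ N, Φ (cesaro u N) - cesaro u N =
      cesaro (fun n => Φ (u n) - u (n + 1)) N + (N : ℝ)⁻¹ • (u N - u 0) := by
    intro N
    simp only [cesaro, map_smul, map_sum, sum_sub_distrib, ← smul_add, ← smul_sub]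
    congr 1
    rw [← sum_range_sub u N, sum_sub_distrib]
    abel
  have hboundary : Tendsto (fun N : ℕ => (N : ℝ)⁻¹ • (u N - u 0)) atTop (𝓝 0) :=
    tendsto_inv_atTop_nhds_zero_nat.zero_smul_isBoundedUnder_le
      (isBoundedUnder_of ⟨C + C, fun n => (norm_sub_le _ _).trans (add_le_add (hu n) (hu 0))⟩)
  have := h.cesaro_smul.add hboundary
  rw [add_zero] at this
  exact this.congr fun N => (key N).symm

end Cesaro

section WeakLimit

variable {𝕜 H : Type*} [RCLike 𝕜] [NormedAddCommGroup H] [InnerProductSpace 𝕜 H]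
  [CompleteSpace H]

theorem exists_tendsto_inner_apply_of_norm_le {ι : Type*} (U : Ultrafilter ι)
    (A : ι → H →L[𝕜] H) {C : ℝ} (hA : ∀ᶠ i in U, ‖A i‖ ≤ C) :
    ∃ S : H →L[𝕜] H, ∀ x y, Tendsto (fun i => ⟪A i x, y⟫_𝕜) U (𝓝 ⟪S x, y⟫_𝕜) := by
  have hbound : ∀ x y, ∀ᶠ i in U, ‖⟪A i x, y⟫_𝕜‖ ≤ C * ‖x‖ * ‖y‖ := fun x y =>
    hA.mono fun i hi => (norm_inner_le_norm _ _).trans <|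
      mul_le_mul_of_nonneg_right ((A i).le_of_opNorm_le hi x) (norm_nonneg y)
  have hlim : ∀ x y, ∃ z, Tendsto (fun i => ⟪A i x, y⟫_𝕜) U (𝓝 z) := fun x y => by
    obtain ⟨z, -, hz⟩ := (isCompact_closedBall (0 : 𝕜) (C * ‖x‖ * ‖y‖)).ultrafilter_le_nhds
      (U.map fun i => ⟪A i x, y⟫_𝕜) (by
        rw [Ultrafilter.coe_map, le_principal_iff]
        exact (hbound x y).mono fun i hi => mem_closedBall_zero_iff.2 hi)
    exact ⟨z, hz⟩
  choose B hB using hlim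
  have huniq : ∀ {x y z}, Tendsto (fun i => ⟪A i x, y⟫_𝕜) U (𝓝 z) → B x y = z :=
    fun h => tendsto_nhds_unique (hB _ _) h
  let B₂ : H →L⋆[𝕜] H →L[𝕜] 𝕜 := LinearMap.mkContinuous₂
    (LinearMap.mk₂'ₛₗ (starRingEnd 𝕜) (RingHom.id 𝕜) B
      (fun x x' y => huniq <| by simpa [inner_add_left] using (hB x y).add (hB x' y))
      (fun c x y => huniq <| by simpa [inner_smul_left] using (hB x y).const_mul _)
      (fun x y y' => huniq <| by simpa [inner_add_right] using (hB x y).add (hB x y'))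
      (fun c x y => huniq <| by simpa [inner_smul_right] using (hB x y).const_mul c))
    C fun x y => le_of_tendsto (hB x y).norm (hbound x y)
  refine ⟨InnerProductSpace.continuousLinearMapOfBilin B₂, fun x y => ?_⟩
  rw [InnerProductSpace.continuousLinearMapOfBilin_apply]
  exact hB x y

end WeakLimit

section LoewnerOrder

variable {H : Type*} [NormedAddCommGroup H] [InnerProductSpace ℂ H]

theorem ContinuousLinearMap.le_iff_inner_le {A B : H →L[ℂ] H} :
    A ≤ B ↔ ∀ x, ⟪A x, x⟫_ℂ ≤ ⟪B x, x⟫_ℂ := by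
  simp only [le_def, isPositive_iff_complex, sub_apply, inner_sub_left]
  refine forall_congr' fun x => ?_
  rw [← sub_nonneg (b := ⟪A x, x⟫_ℂ), Complex.nonneg_iff, Complex.ext_iff]
  simp [and_comm]

theorem ContinuousLinearMap.ge_of_tendsto_inner {ι : Type*} {l : Filter ι} [l.NeBot]
    {A : ι → H →L[ℂ] H} {S B : H →L[ℂ] H}
    (hS : ∀ x, Tendsto (fun i => ⟪A i x, x⟫_ℂ) l (𝓝 ⟪S x, x⟫_ℂ)) (hB : ∀ᶠ i in l, B ≤ A i) :
    B ≤ S :=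
  le_iff_inner_le.2 fun x => ge_of_tendsto (hS x) (hB.mono fun _ h => le_iff_inner_le.1 h x)

theorem inner_cesaro_apply (u : ℕ → H →L[ℂ] H) (N : ℕ) (x y : H) :
    ⟪cesaro u N x, y⟫_ℂ = cesaro (fun n => ⟪u n x, y⟫_ℂ) N := by
  simp [cesaro]

end LoewnerOrder

section CesaroGram

variable {H : Type*} [NormedAddCommGroup H] [InnerProductSpace ℂ H] [CompleteSpace H]
  (T : H →L[ℂ] H)

noncomputable def cesaroGram (n : ℕ) : H →L[ℂ] H := cesaro (fun k => star (T ^ k) * T ^ k) n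

theorem inner_star_mul_mul_apply (A : H →L[ℂ] H) (x y : H) :
    ⟪(star T * A * T) x, y⟫_ℂ = ⟪A (T x), T y⟫_ℂ := by
  simp [star_eq_adjoint, adjoint_inner_left]

theorem inner_smul_star_mul_self_apply_self (c : ℝ) (A : H →L[ℂ] H) (x : H) :
    ⟪(c • (star A * A)) x, x⟫_ℂ = ((c * ‖A x‖ ^ 2 : ℝ) : ℂ) := by
  simp [star_eq_adjoint, adjoint_inner_left, inner_self_eq_norm_sq_to_K]

theorem inner_cesaroGram_apply_self (n : ℕ) (x : H) :
    ⟪cesaroGram T n x, x⟫_ℂ = ((1 / (n : ℝ) * ∑ k ∈ range n, ‖(T ^ k) x‖ ^ 2 : ℝ) : ℂ) := by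
  have hterm : ∀ k, ⟪(star (T ^ k) * T ^ k) x, x⟫_ℂ = ((‖(T ^ k) x‖ ^ 2 : ℝ) : ℂ) := fun k => by
    simpa using inner_smul_star_mul_self_apply_self 1 (T ^ k) x
  rw [cesaroGram, inner_cesaro_apply, cesaro]
  simp only [hterm, Complex.real_smul, ← Complex.ofReal_sum, ← Complex.ofReal_mul, one_div]

theorem cesaroGram_nonneg (n : ℕ) : 0 ≤ cesaroGram T n :=
  smul_nonneg (by positivity) (sum_nonneg fun k _ => star_mul_self_nonneg (T ^ k))

theorem cesaroGram_le {M : ℝ}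
    (hup : ∀ N : ℕ, 1 ≤ N → ∀ x : H,
      (1 / (N : ℝ)) * ∑ n ∈ range N, ‖(T ^ n) x‖ ^ 2 ≤ M * ‖x‖ ^ 2)
    {n : ℕ} (hn : 1 ≤ n) : cesaroGram T n ≤ M • 1 := by
  refine le_iff_inner_le.2 fun x => ?_
  have hM : ⟪(M • (1 : H →L[ℂ] H)) x, x⟫_ℂ = ((M * ‖x‖ ^ 2 : ℝ) : ℂ) := by
    simp [inner_self_eq_norm_sq_to_K]
  rw [inner_cesaroGram_apply_self, hM]
  exact_mod_cast hup n hn x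

theorem smul_star_mul_self_le_cesaroGram (K : H →L[ℂ] H) {m : ℝ}
    (hlow : ∀ N : ℕ, 1 ≤ N → ∀ x : H,
      m * ‖K x‖ ^ 2 ≤ (1 / (N : ℝ)) * ∑ n ∈ range N, ‖(T ^ n) x‖ ^ 2)
    {n : ℕ} (hn : 1 ≤ n) : m • (star K * K) ≤ cesaroGram T n := by
  refine le_iff_inner_le.2 fun x => ?_
  rw [inner_cesaroGram_apply_self, inner_smul_star_mul_self_apply_self]
  exact_mod_cast hlow n hn x

theorem star_mul_cesaroGram_mul_sub (n : ℕ) :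
    star T * cesaroGram T (n + 1) * T - cesaroGram T (n + 2) =
      ((n : ℝ) + 1)⁻¹ • (cesaroGram T (n + 2) - 1) := by
  have hconj : ∀ k, star T * (star (T ^ k) * T ^ k) * T = star (T ^ (k + 1)) * T ^ (k + 1) :=
    fun k => by simp only [pow_succ, star_mul, mul_assoc]
  have hsum : star T * (∑ k ∈ range (n + 1), star (T ^ k) * T ^ k) * T =
      ∑ k ∈ range (n + 2), star (T ^ k) * T ^ k - 1 := by
    rw [sum_range_succ' _ (n + 1), mul_sum, sum_mul, pow_zero, star_one, mul_one,
      add_sub_cancel_right]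
    exact sum_congr rfl fun k _ => hconj k
  simp only [cesaroGram, cesaro, mul_smul_comm, smul_mul_assoc, hsum]
  push_cast
  match_scalars <;> field_simp
  ring

theorem tendsto_star_mul_cesaro_cesaroGram_mul_sub {C : ℝ}
    (hC : ∀ n, ‖cesaroGram T (n + 1)‖ ≤ C) :
    Tendsto (fun N => star T * cesaro (fun n => cesaroGram T (n + 1)) N * T -
      cesaro (fun n => cesaroGram T (n + 1)) N) atTop (𝓝 0) := by
  let Φ : (H →L[ℂ] H) →ₗ[ℝ] H →L[ℂ] H := LinearMap.mulLeft ℝ (star T) ∘ₗ LinearMap.mulRight ℝ T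
  have hΦ : ∀ A, Φ A = star T * A * T := fun A => (mul_assoc _ _ _).symm
  simp only [← hΦ]
  refine tendsto_map_cesaro_sub_cesaro Φ hC ?_
  simp only [hΦ, star_mul_cesaroGram_mul_sub]
  refine Tendsto.zero_smul_isBoundedUnder_le ?_ (isBoundedUnder_of ⟨C + 1, fun n => ?_⟩)
  · simpa [Function.comp_def] using
      (tendsto_inv_atTop_nhds_zero_nat (𝕜 := ℝ)).comp (tendsto_add_atTop_nat 1)
  · exact (norm_sub_le _ _).trans (add_le_add (hC (n + 1)) norm_id_le)

theorem star_mul_mul_eq_of_tendsto_inner {ι : Type*} {l : Filter ι} [l.NeBot]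
    {A : ι → H →L[ℂ] H} {S : H →L[ℂ] H}
    (hS : ∀ x y, Tendsto (fun i => ⟪A i x, y⟫_ℂ) l (𝓝 ⟪S x, y⟫_ℂ))
    (hA : Tendsto (fun i => star T * A i * T - A i) l (𝓝 0)) :
    star T * S * T = S := by
  refine ext fun x => ext_inner_right ℂ fun y => ?_
  have hcont : Continuous fun A : H →L[ℂ] H => ⟪A x, y⟫_ℂ := by fun_prop
  have hlim := ((hcont.tendsto 0).comp hA).add (hS x y)
  simp only [Function.comp_def, sub_apply, inner_sub_left, zero_apply, inner_zero_left,
    zero_add, sub_add_cancel, inner_star_mul_mul_apply] at hlim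
  rw [inner_star_mul_mul_apply]
  exact tendsto_nhds_unique (hS (T x) (T y)) hlim

theorem exists_conj_invariant_of_cesaro_bounds (K : H →L[ℂ] H) {m M : ℝ}
    (hlow : ∀ N : ℕ, 1 ≤ N → ∀ x : H,
      m * ‖K x‖ ^ 2 ≤ (1 / (N : ℝ)) * ∑ n ∈ range N, ‖(T ^ n) x‖ ^ 2)
    (hup : ∀ N : ℕ, 1 ≤ N → ∀ x : H,
      (1 / (N : ℝ)) * ∑ n ∈ range N, ‖(T ^ n) x‖ ^ 2 ≤ M * ‖x‖ ^ 2) :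
    ∃ S : H →L[ℂ] H, m • (star K * K) ≤ S ∧ star T * S * T = S ∧
      ∀ v, (∀ k, ‖(T ^ k) v‖ = ‖v‖) → ⟪S v, v⟫_ℂ = ((‖v‖ ^ 2 : ℝ) : ℂ) := by
  set C := ‖M • (1 : H →L[ℂ] H)‖
  have hG_norm : ∀ n, ‖cesaroGram T (n + 1)‖ ≤ C := fun n =>
    CStarAlgebra.norm_le_norm_of_nonneg_of_le (cesaroGram_nonneg T _)
      (cesaroGram_le T hup n.succ_pos)
  obtain ⟨U, hU⟩ := Ultrafilter.exists_le (atTop : Filter ℕ)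
  have hU_pos : ∀ᶠ N in U, N ≠ 0 := hU (eventually_ne_atTop 0)
  obtain ⟨S, hS⟩ := exists_tendsto_inner_apply_of_norm_le U
    (cesaro fun n => cesaroGram T (n + 1)) (C := C) <| hU_pos.mono fun N hN =>
      mem_closedBall_zero_iff.1 <| cesaro_mem (convex_closedBall 0 C)
        (fun n => mem_closedBall_zero_iff.2 (hG_norm n)) hN
  refine ⟨S, ge_of_tendsto_inner (fun x => hS x x) (hU_pos.mono fun N hN => ?_),
    star_mul_mul_eq_of_tendsto_inner T hS
      ((tendsto_star_mul_cesaro_cesaroGram_mul_sub T hG_norm).mono_left hU),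
    fun v hv => ?_⟩
  · exact cesaro_mem (convex_Ici _)
      (fun n => Set.mem_Ici.2 (smul_star_mul_self_le_cesaroGram T K hlow n.succ_pos)) hN
  · have hG_v : ∀ n, ⟪cesaroGram T (n + 1) v, v⟫_ℂ = ((‖v‖ ^ 2 : ℝ) : ℂ) := fun n => by
      simp only [inner_cesaroGram_apply_self, hv, sum_const, card_range, nsmul_eq_mul]
      field_simp
    refine tendsto_nhds_unique (hS v v) (tendsto_const_nhds.congr' ?_)
    filter_upwards [hU_pos] with N hN
    rw [inner_cesaro_apply]
    exact (cesaro_mem (convex_singleton _) hG_v hN).symm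

theorem inner_apply_self_eq_norm_sqrt_apply_sq {S : H →L[ℂ] H} (hS : 0 ≤ S) (x : H) :
    ⟪S x, x⟫_ℂ = ((‖CFC.sqrt S x‖ ^ 2 : ℝ) : ℂ) := by
  have h := (CFC.sqrt_nonneg S).isSelfAdjoint.isSymmetric (CFC.sqrt S x) x
  rw [coe_coe, ← mul_apply_eq_comp, CFC.sqrt_mul_sqrt_self S hS, inner_self_eq_norm_sq_to_K] at h
  exact_mod_cast h

theorem exists_isSelfAdjoint_norm_invariant_of_cesaro_bounds (K : H →L[ℂ] H) {m M : ℝ}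
    (hm : 0 ≤ m)
    (hlow : ∀ N : ℕ, 1 ≤ N → ∀ x : H,
      m * ‖K x‖ ^ 2 ≤ (1 / (N : ℝ)) * ∑ n ∈ range N, ‖(T ^ n) x‖ ^ 2)
    (hup : ∀ N : ℕ, 1 ≤ N → ∀ x : H,
      (1 / (N : ℝ)) * ∑ n ∈ range N, ‖(T ^ n) x‖ ^ 2 ≤ M * ‖x‖ ^ 2) :
    ∃ R : H →L[ℂ] H, IsSelfAdjoint R ∧ (∀ x, ‖R (T x)‖ = ‖R x‖) ∧
      (∀ x, m * ‖K x‖ ^ 2 ≤ ‖R x‖ ^ 2) ∧ ∀ v, (∀ k, ‖(T ^ k) v‖ = ‖v‖) → ‖R v‖ = ‖v‖ := by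
  obtain ⟨S, hKS, hTS, hS_iso⟩ := exists_conj_invariant_of_cesaro_bounds T K hlow hup
  have hS : 0 ≤ S := (smul_nonneg hm (star_mul_self_nonneg K)).trans hKS
  have hR_sq := inner_apply_self_eq_norm_sqrt_apply_sq hS
  refine ⟨CFC.sqrt S, (CFC.sqrt_nonneg S).isSelfAdjoint, fun x => ?_, fun x => ?_, fun v hv => ?_⟩
  · have h : ⟪S (T x), T x⟫_ℂ = ⟪S x, x⟫_ℂ := by rw [← inner_star_mul_mul_apply, hTS]
    rw [hR_sq, hR_sq, Complex.ofReal_inj] at h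
    exact (pow_left_inj₀ (norm_nonneg _) (norm_nonneg _) two_ne_zero).1 h
  · have h := le_iff_inner_le.1 hKS x
    rw [hR_sq, inner_smul_star_mul_self_apply_self] at h
    exact_mod_cast h
  · have h := hS_iso v hv
    rw [hR_sq, Complex.ofReal_inj] at h
    exact (pow_left_inj₀ (norm_nonneg _) (norm_nonneg _) two_ne_zero).1 h

end CesaroGram

theorem Module.End.exists_eigenvector_mem_of_mapsTo {K V : Type*} [Field K] [IsAlgClosed K]
    [AddCommGroup V] [Module K V] (f : Module.End K V) {p : Submodule K V} [FiniteDimensional K p]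
    (hp : p ≠ ⊥) (hf : ∀ v ∈ p, f v ∈ p) : ∃ μ : K, ∃ v ∈ p, v ≠ 0 ∧ f v = μ • v := by
  have : Nontrivial p := Submodule.nontrivial_iff_ne_bot.2 hp
  obtain ⟨μ, hμ⟩ := Module.End.exists_eigenvalue (f.restrict hf)
  obtain ⟨v, hv⟩ := hμ.exists_hasEigenvector
  exact ⟨μ, v, v.2, by simpa using hv.2, by simpa using congrArg Subtype.val hv.apply_eq_smul⟩

section Injectivity

variable {E F : Type*} [NormedAddCommGroup E] [NormedSpace ℂ E] [NormedAddCommGroup F]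
  [NormedSpace ℂ F]

theorem norm_pow_apply_eq_of_eigenvector (T : E →L[ℂ] E) {μ : ℂ} {v : E} (hμ : ‖μ‖ = 1)
    (hv : T v = μ • v) (k : ℕ) : ‖(T ^ k) v‖ = ‖v‖ := by
  have : (T ^ k) v = μ ^ k • v := by
    induction k with
    | zero => simp
    | succ k ih => rw [pow_succ', mul_apply_eq_comp, ih, map_smul, hv, smul_smul, pow_succ]
  rw [this, norm_smul, norm_pow, hμ, one_pow, one_mul]

theorem injective_of_unimodular_eigenvalues (T : E →L[ℂ] E) (R : E →L[ℂ] F)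
    [FiniteDimensional ℂ (LinearMap.ker (R : E →ₗ[ℂ] F))] (hRT : ∀ x, ‖R (T x)‖ = ‖R x‖)
    (hR : ∀ v, (∀ k, ‖(T ^ k) v‖ = ‖v‖) → ‖R v‖ = ‖v‖)
    (heig : ∀ (μ : ℂ) (v : E), v ≠ 0 → T v = μ • v → ‖μ‖ = 1) : Function.Injective R := by
  refine (LinearMap.ker_eq_bot (f := (R : E →ₗ[ℂ] F))).1 (by_contra fun hne => ?_)
  have hT : ∀ v ∈ LinearMap.ker (R : E →ₗ[ℂ] F), T v ∈ LinearMap.ker (R : E →ₗ[ℂ] F) :=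
    fun v hv => by simpa [← norm_eq_zero, hRT] using hv
  obtain ⟨μ, v, hv_ker, hv0, hTv⟩ :=
    Module.End.exists_eigenvector_mem_of_mapsTo (T : E →ₗ[ℂ] E) hne hT
  have hRv : R v = 0 := hv_ker
  refine hv0 (norm_eq_zero.1 ?_)
  rw [← hR v (norm_pow_apply_eq_of_eigenvector T (heig μ v hv0 hTv) hTv), hRv, norm_zero]

end Injectivity

section BoundedBelow

variable {𝕜 E : Type*} [RCLike 𝕜] [NormedAddCommGroup E] [InnerProductSpace 𝕜 E]
  [CompleteSpace E]

theorem exists_antilipschitzWith_of_norm_le_mul_norm {F G : Type*} [NormedAddCommGroup F]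
    [NormedSpace 𝕜 F] [CompleteSpace F] [NormedAddCommGroup G] [NormedSpace 𝕜 G] {K : E →L[𝕜] F}
    (hK : IsClosed (Set.range K)) [FiniteDimensional 𝕜 (LinearMap.ker (K : E →ₗ[𝕜] F))]
    {R : E →L[𝕜] G} (hR : Function.Injective R) {c : ℝ} (hKR : ∀ x, ‖K x‖ ≤ c * ‖R x‖) :
    ∃ C, AntilipschitzWith C R := by
  set V := LinearMap.ker (K : E →ₗ[𝕜] F)
  have hKV_inj : Function.Injective (K ∘L Vᗮ.subtypeL) :=
    (injective_iff_map_eq_zero _).2 fun w hw =>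
      Subtype.ext (Submodule.disjoint_def.1 V.orthogonal_disjoint w hw w.2)
  have hKV_range : Set.range (K ∘L Vᗮ.subtypeL) = Set.range K := by
    refine subset_antisymm (Set.range_subset_iff.2 fun w => ⟨w, rfl⟩) ?_
    rintro _ ⟨x, rfl⟩
    obtain ⟨v, hv, w, hw, rfl⟩ := V.exists_add_mem_mem_orthogonal x
    exact ⟨⟨w, hw⟩, by simp [show K v = 0 from hv]⟩
  obtain ⟨C₁, hC₁⟩ := (K ∘L Vᗮ.subtypeL).antilipschitz_of_injective_of_isClosed_range hKV_inj
    (hKV_range ▸ hK)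
  obtain ⟨C₂, -, hC₂⟩ := (R.toLinearMap ∘ₗ V.subtype).exists_antilipschitzWith <|
    LinearMap.ker_eq_bot.2 (hR.comp Subtype.val_injective)
  refine ⟨Real.toNNReal (C₂ + (C₂ * ‖R‖ + 1) * (C₁ * c)), R.antilipschitz_of_bound fun x => ?_⟩
  obtain ⟨v, hv, w, hw, rfl⟩ := V.exists_add_mem_mem_orthogonal x
  have hv_le : ‖v‖ ≤ C₂ * ‖R v‖ := ZeroHomClass.bound_of_antilipschitz _ hC₂ ⟨v, hv⟩
  have hw_le : ‖w‖ ≤ C₁ * c * ‖R (v + w)‖ := by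
    have hKw : K (v + w) = K w := by simp [show K v = 0 from hv]
    calc ‖w‖ ≤ C₁ * ‖K w‖ := ZeroHomClass.bound_of_antilipschitz _ hC₁ ⟨w, hw⟩
      _ ≤ C₁ * (c * ‖R (v + w)‖) := by gcongr; exact hKw ▸ hKR (v + w)
      _ = C₁ * c * ‖R (v + w)‖ := by ring
  have hRv : ‖R v‖ ≤ ‖R (v + w)‖ + ‖R‖ * ‖w‖ := by
    calc ‖R v‖ = ‖R (v + w) - R w‖ := by simp
      _ ≤ ‖R (v + w)‖ + ‖R w‖ := norm_sub_le _ _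
      _ ≤ ‖R (v + w)‖ + ‖R‖ * ‖w‖ := by gcongr; exact R.le_opNorm w
  calc ‖v + w‖ ≤ ‖v‖ + ‖w‖ := norm_add_le v w
    _ ≤ C₂ * (‖R (v + w)‖ + ‖R‖ * ‖w‖) + ‖w‖ := by gcongr; exact hv_le.trans (by gcongr)
    _ = C₂ * ‖R (v + w)‖ + (C₂ * ‖R‖ + 1) * ‖w‖ := by ring
    _ ≤ C₂ * ‖R (v + w)‖ + (C₂ * ‖R‖ + 1) * (C₁ * c * ‖R (v + w)‖) := by gcongr
    _ = (C₂ + (C₂ * ‖R‖ + 1) * (C₁ * c)) * ‖R (v + w)‖ := by ring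
    _ ≤ _ := by gcongr; exact Real.le_coe_toNNReal _

theorem IsSelfAdjoint.isUnit_of_antilipschitzWith {R : E →L[𝕜] E} (hR : IsSelfAdjoint R)
    {C : NNReal} (hC : AntilipschitzWith C R) : IsUnit R := by
  rw [isUnit_iff_bijective, bijective_iff_dense_range_and_antilipschitz]
  refine ⟨?_, C, hC⟩
  rw [Submodule.topologicalClosure_eq_top_iff, orthogonal_range, hR.adjoint_eq,
    LinearMap.ker_eq_bot]
  exact hC.injective

end BoundedBelow

theorem similar_to_isometry_of_K_cesaro_bounds_general
    {H : Type*} [NormedAddCommGroup H] [InnerProductSpace ℂ H] [CompleteSpace H]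
    (T K : H →L[ℂ] H) (m M : ℝ) (hm : 0 < m)
    (hclosed : IsClosed (Set.range K))
    (hker : FiniteDimensional ℂ (LinearMap.ker (K : H →ₗ[ℂ] H)))
    (hbd : ∀ N : ℕ, 1 ≤ N → ∀ x : H,
      m * ‖K x‖ ^ 2 ≤ (1 / (N : ℝ)) * ∑ n ∈ Finset.range N, ‖(T ^ n) x‖ ^ 2 ∧
      (1 / (N : ℝ)) * ∑ n ∈ Finset.range N, ‖(T ^ n) x‖ ^ 2 ≤ M * ‖x‖ ^ 2)
    (heig : ∀ (lam : ℂ) (x : H), x ≠ 0 → T x = lam • x → ‖lam‖ = 1) :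
    ∃ L : H ≃L[ℂ] H, ∀ x : H, ‖L.symm (T (L x))‖ = ‖x‖ := by
  obtain ⟨R, hR_sa, hRT, hKR, hR_iso⟩ := exists_isSelfAdjoint_norm_invariant_of_cesaro_bounds T K
    hm.le (fun N hN x => (hbd N hN x).1) (fun N hN x => (hbd N hN x).2)
  have hKR' : ∀ x, ‖K x‖ ≤ (√m)⁻¹ * ‖R x‖ := fun x => by
    have h := hKR x
    rw [← Real.sq_sqrt hm.le, ← mul_pow] at h
    rw [le_inv_mul_iff₀ (Real.sqrt_pos.2 hm)]
    exact (pow_le_pow_iff_left₀ (by positivity) (norm_nonneg _) two_ne_zero).1 h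
  have hker_le : LinearMap.ker (R : H →ₗ[ℂ] H) ≤ LinearMap.ker (K : H →ₗ[ℂ] H) :=
    fun x (hx : R x = 0) => norm_le_zero_iff.1 <| by simpa [hx] using hKR' x
  have : FiniteDimensional ℂ (LinearMap.ker (R : H →ₗ[ℂ] H)) :=
    Submodule.finiteDimensional_of_le hker_le
  obtain ⟨C, hC⟩ := exists_antilipschitzWith_of_norm_le_mul_norm hclosed
    (injective_of_unimodular_eigenvalues T R hRT hR_iso heig) hKR'
  obtain ⟨u, hu⟩ := hR_sa.isUnit_of_antilipschitzWith hC
  set e := ContinuousLinearEquiv.ofUnit u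
  have he : ∀ y, e y = R y := fun y => by rw [← hu]; rfl
  refine ⟨e.symm, fun x => ?_⟩
  rw [ContinuousLinearEquiv.symm_symm, he, hRT, ← he, ContinuousLinearEquiv.apply_symm_apply]

theorem similar_to_isometry_of_K_cesaro_bounds
    {H : Type*} [NormedAddCommGroup H] [InnerProductSpace ℂ H] [CompleteSpace H]
    (T K : H →L[ℂ] H) (m M : ℝ) (hm : 0 < m) (hM : 0 < M)
    (hclosed : IsClosed (Set.range K))
    (hker : FiniteDimensional ℂ (LinearMap.ker (K : H →ₗ[ℂ] H)))
    (hbd : ∀ N : ℕ, 1 ≤ N → ∀ x : H,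
      m * ‖K x‖ ^ 2 ≤ (1 / (N : ℝ)) * ∑ n ∈ Finset.range N, ‖(T ^ n) x‖ ^ 2 ∧
      (1 / (N : ℝ)) * ∑ n ∈ Finset.range N, ‖(T ^ n) x‖ ^ 2 ≤ M * ‖x‖ ^ 2)
    (heig : ∀ (lam : ℂ) (x : H), x ≠ 0 → T x = lam • x → ‖lam‖ = 1) :
    ∃ L : H ≃L[ℂ] H, ∀ x : H, ‖L.symm (T (L x))‖ = ‖x‖ :=
  similar_to_isometry_of_K_cesaro_bounds_general T K m M hm hclosed hker hbd heig
end

section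
/- Let S be a semigroup and π : S → B(H) a representation such that m²I ≤ π(s)*π(s) ≤ M²I for all s ∈ S, for some 0 < m ≤ M. Suppose m_r is a right invariant mean on the bounded functions on S (m_r(f(·s)) = m_r(f) for all s). Then |x|² = m_r(t ↦ ‖π(t)x‖²) defines an equivalent Hilbertian norm with m‖x‖ ≤ |x| ≤ M‖x‖ in which every π(s) is an isometry; hence there is an invertible L ∈ B(H) with ‖L⁻¹‖‖L‖ ≤ M/m such that L⁻¹π(·)L is an isometric representation. -/
/-!
The averaged quadratic form `q x = mean_t ‖π t x‖²` is the diagonal of the bounded sesquilinear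
form `mean_t ⟪π t x, π t y⟫` (with the mean extended complex-linearly), so `q x = ⟪T x, x⟫` for a
positive operator `T`, invertible because `q x ≥ m² ‖x‖²`. Then `A = √T` is invertible with
`‖A x‖² = q x`, so `m ‖x‖ ≤ ‖A x‖ ≤ M ‖x‖`, and right invariance of the mean gives
`q (π s x) = q x`: every `A π(s) A⁻¹` is an isometry, and `L = A⁻¹` works.
-/

open scoped InnerProductSpace

structure IsMean {S : Type*} (mean : (S → ℝ) → ℝ) : Prop where
  add : ∀ f g : S → ℝ, mean (f + g) = mean f + mean g
  smul : ∀ (c : ℝ) (f : S → ℝ), mean (c • f) = c * mean f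
  mono : ∀ f g : S → ℝ, (∀ t, f t ≤ g t) → mean f ≤ mean g
  one : mean (fun _ => 1) = 1

def complexMean {S : Type*} (mean : (S → ℝ) → ℝ) (f : S → ℂ) : ℂ :=
  mean (fun t => (f t).re) + mean (fun t => (f t).im) * Complex.I

namespace IsMean

variable {S : Type*} {mean : (S → ℝ) → ℝ} (hμ : IsMean mean)
include hμ

theorem apply_add (f g : S → ℝ) : mean (fun t => f t + g t) = mean f + mean g :=
  hμ.add f g

theorem apply_mul (c : ℝ) (f : S → ℝ) : mean (fun t => c * f t) = c * mean f :=
  hμ.smul c f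

theorem apply_sub (f g : S → ℝ) : mean (fun t => f t - g t) = mean f - mean g := by
  have h := hμ.apply_add f fun t => -1 * g t
  rw [hμ.apply_mul] at h
  simpa [sub_eq_add_neg] using h

theorem apply_const (c : ℝ) : mean (fun _ => c) = c := by
  simpa [hμ.one] using hμ.apply_mul c fun _ => 1

theorem apply_le_of_forall_le {f : S → ℝ} {c : ℝ} (h : ∀ t, f t ≤ c) : mean f ≤ c :=
  hμ.apply_const c ▸ hμ.mono _ _ h

theorem le_apply_of_forall_le {f : S → ℝ} {c : ℝ} (h : ∀ t, c ≤ f t) : c ≤ mean f :=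
  hμ.apply_const c ▸ hμ.mono _ _ h

theorem abs_apply_le_of_forall_abs_le {f : S → ℝ} {c : ℝ} (h : ∀ t, |f t| ≤ c) :
    |mean f| ≤ c :=
  abs_le.2 ⟨hμ.le_apply_of_forall_le fun t => (abs_le.1 (h t)).1,
    hμ.apply_le_of_forall_le fun t => (abs_le.1 (h t)).2⟩

theorem complexMean_add (f g : S → ℂ) :
    complexMean mean (fun t => f t + g t) = complexMean mean f + complexMean mean g := by
  simp only [complexMean, Complex.add_re, Complex.add_im, hμ.apply_add]
  push_cast
  ring

theorem complexMean_smul (c : ℂ) (f : S → ℂ) :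
    complexMean mean (fun t => c * f t) = c * complexMean mean f := by
  simp only [complexMean, Complex.mul_re, Complex.mul_im, hμ.apply_sub, hμ.apply_add,
    hμ.apply_mul]
  apply Complex.ext <;> simp

theorem complexMean_ofReal (f : S → ℝ) : complexMean mean (fun t => (f t : ℂ)) = mean f := by
  simp [complexMean, hμ.apply_const 0]

theorem norm_complexMean_le {f : S → ℂ} {c : ℝ} (h : ∀ t, ‖f t‖ ≤ c) :
    ‖complexMean mean f‖ ≤ 2 * c := by
  calc ‖complexMean mean f‖ ≤ |mean (fun t => (f t).re)| + |mean (fun t => (f t).im)| := by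
        simpa [complexMean] using Complex.norm_le_abs_re_add_abs_im (complexMean mean f)
    _ ≤ c + c := add_le_add
        (hμ.abs_apply_le_of_forall_abs_le fun t => (Complex.abs_re_le_norm _).trans (h t))
        (hμ.abs_apply_le_of_forall_abs_le fun t => (Complex.abs_im_le_norm _).trans (h t))
    _ = 2 * c := by ring

theorem mean_norm_apply_sq_bounds {H : Type*} [NormedAddCommGroup H] {π : S → H → H}
    {m M : ℝ} (hm : 0 ≤ m) (hπ : ∀ s x, m * ‖x‖ ≤ ‖π s x‖ ∧ ‖π s x‖ ≤ M * ‖x‖) (x : H) :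
    m ^ 2 * ‖x‖ ^ 2 ≤ (mean fun t => ‖π t x‖ ^ 2) ∧
      (mean fun t => ‖π t x‖ ^ 2) ≤ M ^ 2 * ‖x‖ ^ 2 := by
  rw [← mul_pow, ← mul_pow]
  exact ⟨hμ.le_apply_of_forall_le fun t => pow_le_pow_left₀ (by positivity) (hπ t x).1 2,
    hμ.apply_le_of_forall_le fun t => pow_le_pow_left₀ (norm_nonneg _) (hπ t x).2 2⟩

end IsMean

theorem ContinuousLinearMap.IsPositive.exists_equiv_norm_sq_eq_re_inner {H : Type*}
    [NormedAddCommGroup H] [InnerProductSpace ℂ H] [CompleteSpace H] {T : H →L[ℂ] H}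
    (hT : T.IsPositive) (hunit : IsUnit T) :
    ∃ A : H ≃L[ℂ] H, ∀ x, ‖A x‖ ^ 2 = RCLike.re ⟪T x, x⟫_ℂ := by
  have hT0 : 0 ≤ T := (nonneg_iff_isPositive T).2 hT
  obtain ⟨u, hu⟩ := (CFC.isUnit_sqrt_iff T hT0).2 hunit
  refine ⟨ContinuousLinearEquiv.unitsEquiv ℂ H u, fun x => ?_⟩
  have hsa : IsSelfAdjoint (CFC.sqrt T) := IsSelfAdjoint.of_nonneg (CFC.sqrt_nonneg T)
  rw [ContinuousLinearEquiv.unitsEquiv_apply, hu, apply_norm_sq_eq_inner_adjoint_left,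
    ← star_eq_adjoint, hsa.star_eq, ← mul_def, CFC.sqrt_mul_sqrt_self T hT0]

theorem ContinuousLinearEquiv.norm_mul_norm_symm_le {𝕜 E F : Type*} [NontriviallyNormedField 𝕜]
    [NormedAddCommGroup E] [NormedSpace 𝕜 E] [NormedAddCommGroup F] [NormedSpace 𝕜 F]
    (A : E ≃L[𝕜] F) {m M : ℝ} (hm : 0 < m) (hM : 0 ≤ M) (hlow : ∀ x, m * ‖x‖ ≤ ‖A x‖)
    (hup : ∀ x, ‖A x‖ ≤ M * ‖x‖) : ‖(A : E →L[𝕜] F)‖ * ‖(A.symm : F →L[𝕜] E)‖ ≤ M / m := by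
  have hA : ‖(A : E →L[𝕜] F)‖ ≤ M := ContinuousLinearMap.opNorm_le_bound _ hM hup
  have hA_symm : ‖(A.symm : F →L[𝕜] E)‖ ≤ m⁻¹ :=
    ContinuousLinearMap.opNorm_le_bound _ (inv_nonneg.2 hm.le) fun y => by
      rw [inv_mul_eq_div, le_div_iff₀ hm, mul_comm]
      simpa using hlow (A.symm y)
  calc ‖(A : E →L[𝕜] F)‖ * ‖(A.symm : F →L[𝕜] E)‖ ≤ M * m⁻¹ :=
        mul_le_mul hA hA_symm (norm_nonneg _) hM
    _ = M / m := (div_eq_mul_inv _ _).symm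

section AveragedInner

variable {S H : Type*} [NormedAddCommGroup H] [InnerProductSpace ℂ H]
  {mean : (S → ℝ) → ℝ}

noncomputable def averagedInner (hμ : IsMean mean) (π : S → H →L[ℂ] H) : H →ₗ⋆[ℂ] H →ₗ[ℂ] ℂ :=
  LinearMap.mk₂'ₛₗ (starRingEnd ℂ) (RingHom.id ℂ)
    (fun x y => complexMean mean fun t => ⟪π t x, π t y⟫_ℂ)
    (fun x x' y => by simp only [map_add, inner_add_left]; exact hμ.complexMean_add _ _)
    (fun c x y => by simp only [map_smul, inner_smul_left]; exact hμ.complexMean_smul _ _)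
    (fun x y y' => by simp only [map_add, inner_add_right]; exact hμ.complexMean_add _ _)
    (fun c x y => by simp only [map_smul, inner_smul_right]; exact hμ.complexMean_smul _ _)

theorem averagedInner_apply (hμ : IsMean mean) (π : S → H →L[ℂ] H) (x y : H) :
    averagedInner hμ π x y = complexMean mean fun t => ⟪π t x, π t y⟫_ℂ :=
  rfl

theorem norm_averagedInner_le (hμ : IsMean mean) {π : S → H →L[ℂ] H} {M : ℝ}
    (hπ : ∀ s x, ‖π s x‖ ≤ M * ‖x‖) (x y : H) :
    ‖averagedInner hμ π x y‖ ≤ 2 * M ^ 2 * ‖x‖ * ‖y‖ := by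
  refine (hμ.norm_complexMean_le (c := M ^ 2 * ‖x‖ * ‖y‖) fun t => ?_).trans_eq (by ring)
  calc ‖⟪π t x, π t y⟫_ℂ‖ ≤ ‖π t x‖ * ‖π t y‖ := norm_inner_le_norm _ _
    _ ≤ (M * ‖x‖) * (M * ‖y‖) :=
      mul_le_mul (hπ t x) (hπ t y) (norm_nonneg _) ((norm_nonneg _).trans (hπ t x))
    _ = M ^ 2 * ‖x‖ * ‖y‖ := by ring

theorem exists_inner_apply_self_eq_mean [CompleteSpace H] (hμ : IsMean mean)
    {π : S → H →L[ℂ] H} {M : ℝ} (hπ : ∀ s x, ‖π s x‖ ≤ M * ‖x‖) :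
    ∃ T : H →L[ℂ] H, ∀ x, ⟪T x, x⟫_ℂ = mean fun t => ‖π t x‖ ^ 2 := by
  refine ⟨InnerProductSpace.continuousLinearMapOfBilin
    ((averagedInner hμ π).mkContinuous₂ _ (norm_averagedInner_le hμ hπ)), fun x => ?_⟩
  rw [InnerProductSpace.continuousLinearMapOfBilin_apply, LinearMap.mkContinuous₂_apply,
    averagedInner_apply, ← hμ.complexMean_ofReal]
  simp [inner_self_eq_norm_sq_to_K]

theorem exists_equiv_norm_sq_eq_mean [CompleteSpace H] (hμ : IsMean mean)
    {π : S → H →L[ℂ] H} {m M : ℝ} (hm : 0 < m) (hlow : ∀ x, m ^ 2 * ‖x‖ ^ 2 ≤ mean fun t => ‖π t x‖ ^ 2)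
    (hup : ∀ s x, ‖π s x‖ ≤ M * ‖x‖) :
    ∃ A : H ≃L[ℂ] H, ∀ x, ‖A x‖ ^ 2 = mean fun t => ‖π t x‖ ^ 2 := by
  obtain ⟨T, hT⟩ := exists_inner_apply_self_eq_mean hμ hup
  have hpos : T.IsPositive := (ContinuousLinearMap.isPositive_iff_complex T).2 fun x => by
    simp only [hT, RCLike.re_to_complex, Complex.ofReal_re, true_and]
    exact (by positivity : (0 : ℝ) ≤ m ^ 2 * ‖x‖ ^ 2).trans (hlow x)
  have hunit : IsUnit T :=
    ContinuousLinearMap.isUnit_of_forall_le_norm_inner_map T (c := (m ^ 2).toNNReal)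
      (Real.toNNReal_pos.2 (by positivity)) fun x => by
        rw [hT, Complex.norm_real, Real.norm_eq_abs, Real.coe_toNNReal _ (by positivity),
          mul_comm]
        exact (hlow x).trans (le_abs_self _)
  obtain ⟨A, hA⟩ := hpos.exists_equiv_norm_sq_eq_re_inner hunit
  exact ⟨A, fun x => by rw [hA, hT, RCLike.re_to_complex, Complex.ofReal_re]⟩

end AveragedInner

theorem isometrizable_of_right_invariant_mean
    {S : Type*} [Semigroup S]
    {H : Type*} [NormedAddCommGroup H] [InnerProductSpace ℂ H] [CompleteSpace H]
    (π : S → (H →L[ℂ] H))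
    (hrep : ∀ s t : S, π (s * t) = (π s).comp (π t))
    (m M : ℝ) (hm : 0 < m) (hmM : m ≤ M)
    (hbd : ∀ (s : S) (x : H), m * ‖x‖ ≤ ‖π s x‖ ∧ ‖π s x‖ ≤ M * ‖x‖)
    (mean : (S → ℝ) → ℝ)
    (hadd : ∀ f g : S → ℝ, mean (f + g) = mean f + mean g)
    (hsmul : ∀ (c : ℝ) (f : S → ℝ), mean (c • f) = c * mean f)
    (hmono : ∀ f g : S → ℝ, (∀ t, f t ≤ g t) → mean f ≤ mean g)
    (hone : mean (fun _ => 1) = 1)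
    (hinv : ∀ (f : S → ℝ) (s : S), mean (fun t => f (t * s)) = mean f) :
    (∀ x : H, m ^ 2 * ‖x‖ ^ 2 ≤ mean (fun t => ‖π t x‖ ^ 2) ∧
      mean (fun t => ‖π t x‖ ^ 2) ≤ M ^ 2 * ‖x‖ ^ 2) ∧
    (∀ (s : S) (x : H),
      mean (fun t => ‖π t (π s x)‖ ^ 2) = mean (fun t => ‖π t x‖ ^ 2)) ∧
    (∃ L : H ≃L[ℂ] H,
      ‖(L.symm : H →L[ℂ] H)‖ * ‖(L : H →L[ℂ] H)‖ ≤ M / m ∧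
      ∀ (s : S) (x : H), ‖L.symm (π s (L x))‖ = ‖x‖) := by
  have hμ : IsMean mean := ⟨hadd, hsmul, hmono, hone⟩
  have hM : 0 ≤ M := hm.le.trans hmM
  have hbounds := hμ.mean_norm_apply_sq_bounds hm.le hbd
  have hinvariant (s : S) (x : H) :
      mean (fun t => ‖π t (π s x)‖ ^ 2) = mean fun t => ‖π t x‖ ^ 2 := by
    simpa [hrep] using hinv (fun t => ‖π t x‖ ^ 2) s
  obtain ⟨A, hA⟩ :=
    exists_equiv_norm_sq_eq_mean hμ hm (fun x => (hbounds x).1) fun s x => (hbd s x).2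
  have hA_bounds (x : H) : m * ‖x‖ ≤ ‖A x‖ ∧ ‖A x‖ ≤ M * ‖x‖ := by
    rw [← pow_le_pow_iff_left₀ (by positivity) (norm_nonneg _) two_ne_zero,
      ← pow_le_pow_iff_left₀ (norm_nonneg _) (by positivity) two_ne_zero, mul_pow, mul_pow, hA]
    exact hbounds x
  refine ⟨hbounds, hinvariant, A.symm, ?_, fun s x => ?_⟩
  · simpa using A.norm_mul_norm_symm_le hm hM (fun x => (hA_bounds x).1)
      fun x => (hA_bounds x).2
  · rw [ContinuousLinearEquiv.symm_symm,
      ← pow_left_inj₀ (norm_nonneg _) (norm_nonneg _) two_ne_zero, hA, hinvariant, ← hA,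
      ContinuousLinearEquiv.apply_symm_apply]
end
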